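/- arXiv:1705.05339 — 7 statements merged into one kernel-verified Lean document; each statement's English description precedes it below -/
import Mathlib

section
/- Let φ_1, …, φ_r be any orthonormal family in H (with 1 ≤ r ≤ M). Then the mean-square projection error of the snapshots onto span{φ_1,…,φ_r} is bounded below by the tail sum of the correlation-matrix eigenvalues: (1/M) Σ_{k=1}^{M} ‖u_k − Σ_{i=1}^{r} ⟨u_k, φ_i⟩ φ_i‖² ≥ Σ_{i=r+1}^{M} λ_i. -/
/-!
Write `z_l = ∑_k v_l(k) u_k`. Since `K = M⁻¹ · gram u` and the `v_l` form an orthonormal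
eigenbasis of `K`, the `z_l` are pairwise orthogonal with `‖z_l‖² = M λ_l`, and the orthogonal
change of variables `u ↦ z` preserves both `∑_k ‖u_k‖²` and `∑_k ⟪u_k, φ_i⟫²`. Hence the error is
`∑_l λ_l - ∑_l λ_l s_l` with `s_l = ∑_i ⟪z_l / ‖z_l‖, φ_i⟫²`. Bessel's inequality in both
directions gives `0 ≤ s_l ≤ 1` and `∑_l s_l ≤ r`, and for decreasing `λ` such weights capture
at most `∑_{l < r} λ_l`.
-/

open Finset
open scoped InnerProductSpace Matrix

theorem sum_mul_le_sum_of_threshold {ι : Type*} [Fintype ι] (F : Finset ι)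
    {lam s : ι → ℝ} {ρ : ℝ} (hρ : 0 ≤ ρ) (hF : ∀ l ∈ F, ρ ≤ lam l) (hFc : ∀ l ∉ F, lam l ≤ ρ)
    (hs₀ : ∀ l, 0 ≤ s l) (hs₁ : ∀ l, s l ≤ 1) (hsum : ∑ l, s l ≤ #F) :
    ∑ l, lam l * s l ≤ ∑ l ∈ F, lam l := by
  classical
  set χ : ι → ℝ := fun l => if l ∈ F then 1 else 0
  have hχ_sum : ∑ l, χ l = #F := by simp [χ]
  have hχ_mul : ∑ l, lam l * χ l = ∑ l ∈ F, lam l := by simp [χ]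
  have hterm : ∀ l, (lam l - ρ) * (s l - χ l) ≤ 0 := by
    intro l
    by_cases hl : l ∈ F
    · simpa [χ, hl] using
        mul_nonpos_of_nonneg_of_nonpos (sub_nonneg.2 (hF l hl)) (sub_nonpos.2 (hs₁ l))
    · simpa [χ, hl] using
        mul_nonpos_of_nonpos_of_nonneg (sub_nonpos.2 (hFc l hl)) (hs₀ l)
  calc ∑ l, lam l * s l
      = ∑ l, (lam l - ρ) * (s l - χ l) + ρ * (∑ l, s l - ∑ l, χ l) + ∑ l, lam l * χ l := by
        simp only [mul_sub, sub_mul, sum_sub_distrib, mul_sum]; ring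
    _ ≤ 0 + ρ * 0 + ∑ l, lam l * χ l := by
        gcongr
        · exact sum_nonpos fun l _ => hterm l
        · linarith
    _ = ∑ l ∈ F, lam l := by rw [hχ_mul]; ring

section InnerProductSpace

variable {E : Type*} [NormedAddCommGroup E] [InnerProductSpace ℝ E]

theorem norm_sum_smul_sq_of_pairwise_inner_eq_zero {ι : Type*} [Fintype ι] {e : ι → E}
    (he : Pairwise fun i j => ⟪e i, e j⟫_ℝ = 0) (a : ι → ℝ) :
    ‖∑ i, a i • e i‖ ^ 2 = ∑ i, a i ^ 2 * ‖e i‖ ^ 2 := by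
  classical
  rw [← real_inner_self_eq_norm_sq, sum_inner]
  refine sum_congr rfl fun i _ => ?_
  have hoff : ∀ j ≠ i, ⟪a i • e i, a j • e j⟫_ℝ = 0 := fun j hji => by
    rw [real_inner_smul_left, real_inner_smul_right, he hji.symm, mul_zero, mul_zero]
  rw [inner_sum, sum_eq_single i (fun j _ => hoff j) (by simp), real_inner_smul_left,
    real_inner_smul_right, real_inner_self_eq_norm_sq]
  ring

theorem norm_sub_sum_inner_smul_sq {ι : Type*} [Fintype ι] {e : ι → E}
    (he : Pairwise fun i j => ⟪e i, e j⟫_ℝ = 0) (x : E) :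
    ‖x - ∑ i, ⟪x, e i⟫_ℝ • e i‖ ^ 2 = ‖x‖ ^ 2 - ∑ i, ⟪x, e i⟫_ℝ ^ 2 * (2 - ‖e i‖ ^ 2) := by
  rw [norm_sub_sq_real, norm_sum_smul_sq_of_pairwise_inner_eq_zero he, inner_sum]
  simp only [real_inner_smul_right, mul_sub, sum_sub_distrib, mul_sum]
  ring_nf

theorem Orthonormal.norm_sub_sum_inner_smul_sq {ι : Type*} [Fintype ι] {e : ι → E}
    (he : Orthonormal ℝ e) (x : E) :
    ‖x - ∑ i, ⟪x, e i⟫_ℝ • e i‖ ^ 2 = ‖x‖ ^ 2 - ∑ i, ⟪x, e i⟫_ℝ ^ 2 := by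
  simp [_root_.norm_sub_sum_inner_smul_sq he.2, he.1]
  norm_num

theorem sum_inner_sq_le_norm_sq_of_pairwise_inner_eq_zero {ι : Type*} [Fintype ι] {e : ι → E}
    (he : Pairwise fun i j => ⟪e i, e j⟫_ℝ = 0) (he₁ : ∀ i, ‖e i‖ ≤ 1) (x : E) :
    ∑ i, ⟪e i, x⟫_ℝ ^ 2 ≤ ‖x‖ ^ 2 := by
  simp_rw [real_inner_comm x]
  have h := norm_sub_sum_inner_smul_sq he x
  have : ∑ i, ⟪x, e i⟫_ℝ ^ 2 ≤ ∑ i, ⟪x, e i⟫_ℝ ^ 2 * (2 - ‖e i‖ ^ 2) := by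
    gcongr with i
    have : ‖e i‖ ^ 2 ≤ 1 := pow_le_one₀ (norm_nonneg _) (he₁ i)
    nlinarith [sq_nonneg ⟪x, e i⟫_ℝ]
  nlinarith [sq_nonneg ‖x - ∑ i, ⟪x, e i⟫_ℝ • e i‖]

theorem sum_norm_sum_smul_sq_of_mem_orthogonalGroup {n : Type*} [Fintype n] [DecidableEq n]
    {V : Matrix n n ℝ} (hV : V ∈ Matrix.orthogonalGroup n ℝ) (u : n → E) :
    ∑ l, ‖∑ k, V l k • u k‖ ^ 2 = ∑ k, ‖u k‖ ^ 2 := by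
  have hcol : ∀ k m, ∑ l, V l k * V l m = if k = m then 1 else 0 := fun k m => by
    simpa [Matrix.mul_apply, Matrix.one_apply] using
      congrFun (congrFun ((Matrix.mem_orthogonalGroup_iff' n ℝ).1 hV) k) m
  simp_rw [← real_inner_self_eq_norm_sq, sum_inner, inner_sum, real_inner_smul_left,
    real_inner_smul_right]
  rw [sum_comm]
  refine sum_congr rfl fun k _ => ?_
  rw [sum_comm]
  simp_rw [← mul_assoc, ← sum_mul, hcol, ite_mul]
  simp

theorem inner_sq_eq_norm_sq_mul_inner_inv_norm_smul_sq (z x : E) :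
    ⟪z, x⟫_ℝ ^ 2 = ‖z‖ ^ 2 * ⟪‖z‖⁻¹ • z, x⟫_ℝ ^ 2 := by
  rcases eq_or_ne z 0 with rfl | hz
  · simp
  · rw [real_inner_smul_left]
    field_simp [norm_ne_zero_iff.2 hz]

theorem inner_sum_smul_sum_smul_of_mulVec_eq_smul {n : Type*} [Fintype n] {u : n → E}
    {K : Matrix n n ℝ} {c μ : ℝ} (hK : Matrix.gram ℝ u = c • K) {b : n → ℝ}
    (hb : K *ᵥ b = μ • b) (a : n → ℝ) :
    ⟪∑ k, a k • u k, ∑ k, b k • u k⟫_ℝ = c * μ * (a ⬝ᵥ b) := by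
  rw [← Matrix.star_dotProduct_gram_mulVec, hK, Matrix.smul_mulVec, hb, star_trivial,
    dotProduct_smul, dotProduct_smul, smul_eq_mul, smul_eq_mul, mul_assoc]

theorem sum_sum_inner_sq_eq_sum_norm_sq_mul {n ι : Type*} [Fintype n] [DecidableEq n] [Fintype ι]
    {V : Matrix n n ℝ} (hV : V ∈ Matrix.orthogonalGroup n ℝ) (u : n → E) (φ : ι → E) :
    ∑ k, ∑ i, ⟪u k, φ i⟫_ℝ ^ 2 =
      ∑ l, ‖∑ k, V l k • u k‖ ^ 2 * ∑ i, ⟪‖∑ k, V l k • u k‖⁻¹ • ∑ k, V l k • u k, φ i⟫_ℝ ^ 2 := by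
  have hrot : ∀ i, ∑ k, ⟪u k, φ i⟫_ℝ ^ 2 = ∑ l, ⟪∑ k, V l k • u k, φ i⟫_ℝ ^ 2 := fun i => by
    have h := sum_norm_sum_smul_sq_of_mem_orthogonalGroup hV fun k => ⟪u k, φ i⟫_ℝ
    simp only [Real.norm_eq_abs, sq_abs, smul_eq_mul] at h
    simp only [sum_inner, real_inner_smul_left, h]
  calc ∑ k, ∑ i, ⟪u k, φ i⟫_ℝ ^ 2 = ∑ i, ∑ l, ⟪∑ k, V l k • u k, φ i⟫_ℝ ^ 2 := by
        rw [sum_comm]; exact sum_congr rfl fun i _ => hrot i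
    _ = _ := by
        rw [sum_comm]
        simp_rw [mul_sum, ← inner_sq_eq_norm_sq_mul_inner_inv_norm_smul_sq]

section Eigenbasis

variable {n : Type*} [Fintype n] [DecidableEq n] {u : n → E} {K : Matrix n n ℝ} {c : ℝ}
  {lam : n → ℝ} {v : n → n → ℝ}

theorem mem_orthogonalGroup_of_dotProduct_eq_ite
    (horth : ∀ l l', v l ⬝ᵥ v l' = if l = l' then 1 else 0) :
    Matrix.of v ∈ Matrix.orthogonalGroup n ℝ :=
  (Matrix.mem_orthogonalGroup_iff _ _).2 <| by
    ext; simp [Matrix.mul_apply, Matrix.one_apply, ← horth, dotProduct]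

theorem norm_sum_eigenvector_smul_sq
    (hK : Matrix.gram ℝ u = c • K) (heig : ∀ l, K *ᵥ v l = lam l • v l)
    (horth : ∀ l l', v l ⬝ᵥ v l' = if l = l' then 1 else 0) (l : n) :
    ‖∑ k, v l k • u k‖ ^ 2 = c * lam l := by
  rw [← real_inner_self_eq_norm_sq, inner_sum_smul_sum_smul_of_mulVec_eq_smul hK (heig l), horth]
  simp

theorem pairwise_inner_sum_eigenvector_smul_eq_zero
    (hK : Matrix.gram ℝ u = c • K) (heig : ∀ l, K *ᵥ v l = lam l • v l)
    (horth : ∀ l l', v l ⬝ᵥ v l' = if l = l' then 1 else 0) :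
    Pairwise fun l l' => ⟪∑ k, v l k • u k, ∑ k, v l' k • u k⟫_ℝ = 0 := fun l l' h => by
  simp [inner_sum_smul_sum_smul_of_mulVec_eq_smul hK (heig l'), horth, h]

theorem sum_norm_sq_eq_mul_sum_eigenvalues
    (hK : Matrix.gram ℝ u = c • K) (heig : ∀ l, K *ᵥ v l = lam l • v l)
    (horth : ∀ l l', v l ⬝ᵥ v l' = if l = l' then 1 else 0) :
    ∑ k, ‖u k‖ ^ 2 = c * ∑ l, lam l := by
  rw [← sum_norm_sum_smul_sq_of_mem_orthogonalGroup
    (mem_orthogonalGroup_of_dotProduct_eq_ite horth), mul_sum]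
  exact sum_congr rfl fun l _ => norm_sum_eigenvector_smul_sq hK heig horth l

theorem exists_sum_sum_inner_sq_eq_mul_sum_eigenvalues_mul
    (hK : Matrix.gram ℝ u = c • K) (heig : ∀ l, K *ᵥ v l = lam l • v l)
    (horth : ∀ l l', v l ⬝ᵥ v l' = if l = l' then 1 else 0)
    {ι : Type*} [Fintype ι] {φ : ι → E} (hφ : Orthonormal ℝ φ) :
    ∃ s : n → ℝ, (∀ l, 0 ≤ s l) ∧ (∀ l, s l ≤ 1) ∧ ∑ l, s l ≤ Fintype.card ι ∧
      ∑ k, ∑ i, ⟪u k, φ i⟫_ℝ ^ 2 = c * ∑ l, lam l * s l := by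
  set z : n → E := fun l => ∑ k, v l k • u k
  -- For a zero eigenvalue `z l = 0`, and `‖0‖⁻¹ = 0` makes `e l = 0`: hence only `‖e l‖ ≤ 1`.
  set e : n → E := fun l => ‖z l‖⁻¹ • z l
  have he_orth : Pairwise fun l l' => ⟪e l, e l'⟫_ℝ = 0 := fun l l' h => by
    have hz : ⟪z l, z l'⟫_ℝ = 0 := pairwise_inner_sum_eigenvector_smul_eq_zero hK heig horth h
    simp only [e, real_inner_smul_left, real_inner_smul_right, hz, mul_zero]
  have he_norm : ∀ l, ‖e l‖ ≤ 1 := fun l => by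
    rw [norm_smul, norm_inv, norm_norm]; exact inv_mul_le_one_of_le₀ le_rfl (norm_nonneg _)
  refine ⟨fun l => ∑ i, ⟪e l, φ i⟫_ℝ ^ 2, fun l => by positivity, fun l => ?_, ?_, ?_⟩
  · simpa [real_inner_comm, sq_abs] using (hφ.sum_inner_products_le (e l) (s := univ)).trans
      (pow_le_one₀ (norm_nonneg _) (he_norm l))
  · rw [sum_comm]
    simpa [hφ.1] using sum_le_sum fun i (_ : i ∈ univ) =>
      sum_inner_sq_le_norm_sq_of_pairwise_inner_eq_zero he_orth he_norm (φ i)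
  · rw [sum_sum_inner_sq_eq_sum_norm_sq_mul (mem_orthogonalGroup_of_dotProduct_eq_ite horth),
      mul_sum]
    refine sum_congr rfl fun l _ => ?_
    simp only [Matrix.of_apply]
    rw [norm_sum_eigenvector_smul_sq hK heig horth, mul_assoc]

end Eigenbasis

end InnerProductSpace

theorem pod_projection_error_lower_bound_general
    {H : Type*} [NormedAddCommGroup H] [InnerProductSpace ℝ H]
    (M : ℕ) (u : Fin M → H)
    (K : Matrix (Fin M) (Fin M) ℝ)
    (hK : ∀ k l : Fin M, K k l = (M : ℝ)⁻¹ * (inner ℝ (u k) (u l) : ℝ))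
    (lam : Fin M → ℝ) (v : Fin M → (Fin M → ℝ))
    (hlam_nonneg : ∀ i, 0 ≤ lam i)
    (hlam_sorted : ∀ i j : Fin M, i ≤ j → lam j ≤ lam i)
    (heig : ∀ l, K.mulVec (v l) = lam l • v l)
    (horth : ∀ l l' : Fin M, dotProduct (v l) (v l') = if l = l' then 1 else 0)
    (r : ℕ) (hr : 1 ≤ r) (hrM : r ≤ M)
    (φ : Fin r → H) (hφ : Orthonormal ℝ φ) :
    (∑ i ∈ Finset.univ.filter fun i : Fin M => r ≤ (i : ℕ), lam i) ≤
      (M : ℝ)⁻¹ * ∑ k, ‖u k - ∑ i, (inner ℝ (u k) (φ i) : ℝ) • φ i‖ ^ 2 := by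
  have hM : (M : ℝ) ≠ 0 := by norm_cast; omega
  have hgram : Matrix.gram ℝ u = (M : ℝ) • K := by
    ext; simp [Matrix.gram_apply, hK, hM]
  obtain ⟨s, hs₀, hs₁, hs_sum, hcaptured⟩ :=
    exists_sum_sum_inner_sq_eq_mul_sum_eigenvalues_mul hgram heig horth hφ
  set F := univ.filter fun l : Fin M => (l : ℕ) < r
  have hcardF : (#F : ℝ) = r := by rw [Fin.card_filter_val_lt, min_eq_right hrM]
  have hcaptured_le : ∑ l, lam l * s l ≤ ∑ l ∈ F, lam l := by
    refine sum_mul_le_sum_of_threshold F (ρ := lam ⟨r - 1, by omega⟩) (hlam_nonneg _) ?_ ?_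
      hs₀ hs₁ (by rw [hcardF]; simpa using hs_sum)
    · intro l hl
      exact hlam_sorted _ _ (Fin.le_def.2 (by have := (mem_filter.1 hl).2; dsimp only; omega))
    · intro l hl
      simp only [F, mem_filter, mem_univ, true_and] at hl
      exact hlam_sorted _ _ (Fin.le_def.2 (by dsimp only; omega))
  have hsplit := sum_filter_add_sum_filter_not univ (fun l : Fin M => r ≤ (l : ℕ)) lam
  simp only [not_le] at hsplit
  simp_rw [hφ.norm_sub_sum_inner_smul_sq, sum_sub_distrib,
    sum_norm_sq_eq_mul_sum_eigenvalues hgram heig horth, hcaptured, ← mul_sub,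
    inv_mul_cancel_left₀ hM]
  linarith

/-- For any orthonormal family `φ_1, …, φ_r` in `H` (`1 ≤ r ≤ M`), the
mean-square projection error of the snapshots onto `span{φ_1,…,φ_r}` is bounded below by
the tail sum of the eigenvalues of the correlation matrix. -/
theorem pod_projection_error_lower_bound
    {H : Type*} [NormedAddCommGroup H] [InnerProductSpace ℝ H]
    (M : ℕ) (hM : 1 ≤ M) (u : Fin M → H)
    (K : Matrix (Fin M) (Fin M) ℝ)
    (hK : ∀ k l : Fin M, K k l = (M : ℝ)⁻¹ * (inner ℝ (u k) (u l) : ℝ))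
    (lam : Fin M → ℝ) (v : Fin M → (Fin M → ℝ))
    (hlam_nonneg : ∀ i, 0 ≤ lam i)
    (hlam_sorted : ∀ i j : Fin M, i ≤ j → lam j ≤ lam i)
    (heig : ∀ l, K.mulVec (v l) = lam l • v l)
    (horth : ∀ l l' : Fin M, dotProduct (v l) (v l') = if l = l' then 1 else 0)
    (r : ℕ) (hr : 1 ≤ r) (hrM : r ≤ M)
    (φ : Fin r → H) (hφ : Orthonormal ℝ φ) :
    (∑ i ∈ Finset.univ.filter fun i : Fin M => r ≤ (i : ℕ), lam i) ≤
      (M : ℝ)⁻¹ * ∑ k, ‖u k - ∑ i, (inner ℝ (u k) (φ i) : ℝ) • φ i‖ ^ 2 :=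
  pod_projection_error_lower_bound_general M u K hK lam v hlam_nonneg hlam_sorted heig horth r hr
    hrM φ hφ
end

section
/- For all indices l, l' with λ_l > 0 and λ_{l'} > 0, the POD modes are orthonormal: ⟨ψ_l, ψ_{l'}⟩ = 1 if l = l' and ⟨ψ_l, ψ_{l'}⟩ = 0 if l ≠ l'. -/
/-!
The Gram matrix of the snapshots is `M K`, so each `v_l` is one of its eigenvectors with
eigenvalue `M λ_l`. Hence `⟪Σ (v_l)_i u_i, Σ (v_l')_i u_i⟫ = M λ_l' ⟨v_l, v_l'⟩ = M λ_l' δ_{l l'}`,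
and the normalisation `(M λ_l)^{-1/2}` turns this into `δ_{l l'}`.
-/

open scoped InnerProductSpace

namespace Matrix

lemma gram_eq_smul_of_apply_eq {ι E : Type*} [SeminormedAddCommGroup E]
    [InnerProductSpace ℝ E] {u : ι → E} {K : Matrix ι ι ℝ} {c : ℝ} (hc : c ≠ 0)
    (hK : ∀ k l, K k l = c⁻¹ * ⟪u k, u l⟫_ℝ) :
    gram ℝ u = c • K := by
  ext k l
  simp only [gram_apply, smul_apply, smul_eq_mul, hK k l, mul_inv_cancel_left₀ hc]

lemma inner_sum_smul_sum_smul_of_gram_mulVec_eq {ι 𝕜 E : Type*} [Fintype ι] [RCLike 𝕜]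
    [SeminormedAddCommGroup E] [InnerProductSpace 𝕜 E] {u : ι → E} {x y : ι → 𝕜} {μ : 𝕜}
    (hy : gram 𝕜 u *ᵥ y = μ • y) :
    ⟪∑ i, x i • u i, ∑ i, y i • u i⟫_𝕜 = μ * (star x ⬝ᵥ y) := by
  rw [← star_dotProduct_gram_mulVec, hy, dotProduct_smul, smul_eq_mul]

end Matrix

theorem pod_modes_orthonormal_general
    {H : Type*} [NormedAddCommGroup H] [InnerProductSpace ℝ H]
    (M : ℕ) (u : Fin M → H)
    (K : Matrix (Fin M) (Fin M) ℝ)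
    (hK : ∀ k l : Fin M, K k l = (M : ℝ)⁻¹ * (inner ℝ (u k) (u l) : ℝ))
    (lam : Fin M → ℝ) (v : Fin M → (Fin M → ℝ))
    (heig : ∀ l, K.mulVec (v l) = lam l • v l)
    (horth : ∀ l l' : Fin M, dotProduct (v l) (v l') = if l = l' then 1 else 0)
    (ψ : Fin M → H)
    (hψ : ∀ l, ψ l = (Real.sqrt (M * lam l))⁻¹ • ∑ i, v l i • u i)
    (l l' : Fin M) (hl : 0 < lam l) :
    (inner ℝ (ψ l) (ψ l') : ℝ) = if l = l' then 1 else 0 := by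
  have hM : (0 : ℝ) < M := Nat.cast_pos.mpr l.pos
  have hgram : (Matrix.gram ℝ u).mulVec (v l') = ((M : ℝ) * lam l') • v l' := by
    rw [Matrix.gram_eq_smul_of_apply_eq hM.ne' hK, Matrix.smul_mulVec, heig, smul_smul]
  rw [hψ l, hψ l', real_inner_smul_left, real_inner_smul_right,
    Matrix.inner_sum_smul_sum_smul_of_gram_mulVec_eq hgram, star_trivial, horth]
  split_ifs with h
  · subst h
    have hMl : 0 < (M : ℝ) * lam l := mul_pos hM hl
    field_simp
    exact (Real.sq_sqrt hMl.le).symm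
  · simp

/-- for indices `l, l'` with `λ_l > 0` and `λ_{l'} > 0`, the POD modes
`ψ_l = (M λ_l)^{-1/2} Σ_i (v_l)_i u_i` are orthonormal. -/
theorem pod_modes_orthonormal
    {H : Type*} [NormedAddCommGroup H] [InnerProductSpace ℝ H]
    (M : ℕ) (hM : 1 ≤ M) (u : Fin M → H)
    (K : Matrix (Fin M) (Fin M) ℝ)
    (hK : ∀ k l : Fin M, K k l = (M : ℝ)⁻¹ * (inner ℝ (u k) (u l) : ℝ))
    (lam : Fin M → ℝ) (v : Fin M → (Fin M → ℝ))
    (hlam_nonneg : ∀ i, 0 ≤ lam i)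
    (hlam_sorted : ∀ i j : Fin M, i ≤ j → lam j ≤ lam i)
    (heig : ∀ l, K.mulVec (v l) = lam l • v l)
    (horth : ∀ l l' : Fin M, dotProduct (v l) (v l') = if l = l' then 1 else 0)
    (ψ : Fin M → H)
    (hψ : ∀ l, ψ l = (Real.sqrt (M * lam l))⁻¹ • ∑ i, v l i • u i)
    (l l' : Fin M) (hl : 0 < lam l) (hl' : 0 < lam l') :
    (inner ℝ (ψ l) (ψ l') : ℝ) = if l = l' then 1 else 0 :=
  pod_modes_orthonormal_general M u K hK lam v heig horth ψ hψ l l' hl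
end

section
/- Let d be the number of positive eigenvalues of K (so λ_d > 0 and λ_i = 0 for i > d), let 0 ≤ r ≤ d, and let a : H × H → ℝ be any symmetric bilinear form. Writing ρ_k := u_k − Σ_{i=1}^{r} ⟨u_k, ψ_i⟩ ψ_i for the POD projection residual of the k-th snapshot, one has the exact identity (1/M) Σ_{k=1}^{M} a(ρ_k, ρ_k) = Σ_{m=r+1}^{d} λ_m a(ψ_m, ψ_m). (The paper's Lemma 2.2 is the special case where a is the H¹ inner product, giving (1/M) Σ_k ‖ρ_k‖₁² = Σ_{m=r+1}^{d} ‖ψ_m‖₁² λ_m.) -/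
/-!
Put `w_l = ∑ⱼ (v_l)ⱼ u_j`. The eigenvalue equation gives `⟪u_k, w_l⟫ = M λ_l (v_l)_k`, hence
`‖w_l‖² = M λ_l`, so `w_l = √(M λ_l) ψ_l` and `⟪u_k, ψ_l⟫ ψ_l = (v_l)_k w_l` for every `l`
(when `λ_l = 0` both sides vanish, `ψ_l` being `0⁻¹ • 0`). As the matrix with rows `v_l` is
orthogonal, `u_k = ∑_l (v_l)_k w_l`, so `ρ_k = ∑_{l ≥ r} (v_l)_k w_l`. Summing `a(ρ_k, ρ_k)` over
`k`, orthonormality of the `v_l` removes the cross terms and leaves `∑_{l ≥ r} M λ_l a(ψ_l, ψ_l)`.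
-/

open Finset Matrix
open scoped RealInnerProductSpace

section Orthonormal

variable {ι κ : Type*} [Fintype ι] [DecidableEq κ] {v : κ → ι → ℝ}

theorem sum_bilin_sum_smul_of_orthonormal {E : Type*} [AddCommGroup E] [Module ℝ E]
    (a : E →ₗ[ℝ] E →ₗ[ℝ] ℝ) (hv : ∀ l l', v l ⬝ᵥ v l' = if l = l' then 1 else 0)
    (w : κ → E) (S : Finset κ) :
    ∑ k, a (∑ l ∈ S, v l k • w l) (∑ l ∈ S, v l k • w l) = ∑ l ∈ S, a (w l) (w l) := by
  have hexpand : ∀ k, a (∑ l ∈ S, v l k • w l) (∑ l ∈ S, v l k • w l) =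
      ∑ l ∈ S, ∑ l' ∈ S, v l k * v l' k * a (w l) (w l') := by
    intro k
    simp only [map_sum, LinearMap.sum_apply, map_smul, LinearMap.smul_apply, smul_eq_mul,
      mul_sum]
    rw [sum_comm]
    exact sum_congr rfl fun _ _ => sum_congr rfl fun _ _ => by ring
  have hv' : ∀ l l', ∑ k, v l k * v l' k = if l = l' then 1 else 0 := hv
  simp_rw [hexpand]
  rw [sum_comm]
  refine sum_congr rfl fun l hl => ?_
  rw [sum_comm]
  simp_rw [← sum_mul, hv', ite_mul, one_mul, zero_mul]
  simp [hl]

end Orthonormal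

section Square

variable {n : Type*} [Fintype n] [DecidableEq n] {v : n → n → ℝ}

theorem sum_mul_eq_ite_of_orthonormal (hv : ∀ l l', v l ⬝ᵥ v l' = if l = l' then 1 else 0)
    (k j : n) : ∑ l, v l k * v l j = if k = j then 1 else 0 := by
  have hrows : Matrix.of v * (Matrix.of v)ᵀ = 1 := by
    ext l l'
    simpa [Matrix.mul_apply, Matrix.one_apply, dotProduct] using hv l l'
  have hcols : (Matrix.of v)ᵀ * Matrix.of v = 1 := mul_eq_one_comm.mp hrows
  simpa [Matrix.mul_apply, Matrix.one_apply] using congrFun (congrFun hcols k) j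

theorem sum_smul_sum_smul_of_orthonormal {E : Type*} [AddCommGroup E] [Module ℝ E]
    (hv : ∀ l l', v l ⬝ᵥ v l' = if l = l' then 1 else 0) (u : n → E) (k : n) :
    ∑ l, v l k • ∑ j, v l j • u j = u k := by
  simp_rw [smul_sum, smul_smul]
  rw [sum_comm]
  simp_rw [← sum_smul, sum_mul_eq_ite_of_orthonormal hv, ite_smul, one_smul, zero_smul]
  simp

end Square

theorem sum_filter_not_lt_eq_sum_filter_le_lt {R : Type*} [AddCommMonoid R] {N : ℕ}
    (r d : ℕ) {f : Fin N → R} (hf : ∀ m : Fin N, d ≤ (m : ℕ) → f m = 0) :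
    ∑ m ∈ univ.filter fun m : Fin N => ¬ (m : ℕ) < r, f m =
      ∑ m ∈ univ.filter fun m : Fin N => r ≤ (m : ℕ) ∧ (m : ℕ) < d, f m := by
  refine (sum_subset (fun m hm => ?_) fun m hmr hmd => hf m ?_).symm
  · simp only [mem_filter, mem_univ, true_and] at hm ⊢
    omega
  · simp only [mem_filter, mem_univ, true_and] at hmr hmd
    omega

section Gram

variable {H : Type*} [NormedAddCommGroup H] [InnerProductSpace ℝ H]

section Snapshots

variable {n : Type*} [Fintype n] {u : n → H} {K : Matrix n n ℝ} {c : ℝ} {lam : n → ℝ}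
  {v : n → n → ℝ}

theorem inner_sum_smul_eq_of_mulVec_eq_smul (hc : c ≠ 0)
    (hK : ∀ k l, K k l = c⁻¹ * ⟪u k, u l⟫) (heig : ∀ l, K *ᵥ v l = lam l • v l) (k l : n) :
    ⟪u k, ∑ j, v l j • u j⟫ = c * lam l * v l k := by
  calc ⟪u k, ∑ j, v l j • u j⟫ = c * (K *ᵥ v l) k := by
        rw [inner_sum, mulVec, dotProduct, mul_sum]
        refine sum_congr rfl fun j _ => ?_
        rw [real_inner_smul_right, hK]
        field_simp
    _ = c * lam l * v l k := by rw [heig, Pi.smul_apply, smul_eq_mul, mul_assoc]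

theorem inner_self_sum_smul_eq_of_mulVec_eq_smul (hc : c ≠ 0)
    (hK : ∀ k l, K k l = c⁻¹ * ⟪u k, u l⟫) (heig : ∀ l, K *ᵥ v l = lam l • v l) {l : n}
    (hvl : v l ⬝ᵥ v l = 1) :
    ⟪∑ j, v l j • u j, ∑ j, v l j • u j⟫ = c * lam l := by
  have hvl' : ∑ j, v l j * v l j = 1 := hvl
  rw [sum_inner]
  simp_rw [real_inner_smul_left, inner_sum_smul_eq_of_mulVec_eq_smul hc hK heig,
    mul_left_comm (v l _), ← mul_sum, hvl', mul_one]

end Snapshots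

theorem eq_smul_of_inner_self_eq_sq {w ψ : H} {s : ℝ} (hw : ⟪w, w⟫ = s ^ 2)
    (hψ : ψ = s⁻¹ • w) : w = s • ψ := by
  rcases eq_or_ne s 0 with rfl | hs
  · simpa using hw
  · rw [hψ, smul_smul, mul_inv_cancel₀ hs, one_smul]

theorem inner_smul_eq_smul_of_inner_self_eq_sq {x w ψ : H} {s c : ℝ} (hw : ⟪w, w⟫ = s ^ 2)
    (hψ : ψ = s⁻¹ • w) (hx : ⟪x, w⟫ = s ^ 2 * c) : ⟪x, ψ⟫ • ψ = c • w := by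
  rcases eq_or_ne s 0 with rfl | hs
  · simp_all
  · rw [hψ, real_inner_smul_right, hx, smul_smul]
    congr 1
    field_simp

end Gram

theorem pod_residual_bilinear_identity_general
    {H : Type*} [NormedAddCommGroup H] [InnerProductSpace ℝ H]
    (M : ℕ) (hM : 1 ≤ M) (u : Fin M → H)
    (K : Matrix (Fin M) (Fin M) ℝ)
    (hK : ∀ k l : Fin M, K k l = (M : ℝ)⁻¹ * (inner ℝ (u k) (u l) : ℝ))
    (lam : Fin M → ℝ) (v : Fin M → (Fin M → ℝ))
    (hlam_nonneg : ∀ i, 0 ≤ lam i)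
    (heig : ∀ l, K.mulVec (v l) = lam l • v l)
    (horth : ∀ l l' : Fin M, dotProduct (v l) (v l') = if l = l' then 1 else 0)
    (ψ : Fin M → H)
    (hψ : ∀ l, ψ l = (Real.sqrt (M * lam l))⁻¹ • ∑ i, v l i • u i)
    (d : ℕ)
    (hd : ∀ i : Fin M, (i : ℕ) < d ↔ 0 < lam i)
    (r : ℕ)
    (a : H →ₗ[ℝ] H →ₗ[ℝ] ℝ)
    (ρ : Fin M → H)
    (hρ : ∀ k, ρ k = u k - ∑ i ∈ Finset.univ.filter fun i : Fin M => (i : ℕ) < r,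
        (inner ℝ (u k) (ψ i) : ℝ) • ψ i) :
    (M : ℝ)⁻¹ * ∑ k, a (ρ k) (ρ k) =
      ∑ m ∈ Finset.univ.filter fun m : Fin M => r ≤ (m : ℕ) ∧ (m : ℕ) < d,
        lam m * a (ψ m) (ψ m) := by
  have hM0 : (M : ℝ) ≠ 0 := Nat.cast_ne_zero.mpr (Nat.one_le_iff_ne_zero.mp hM)
  set w : Fin M → H := fun l => ∑ j, v l j • u j
  have hsq : ∀ l, √(M * lam l) ^ 2 = M * lam l := fun l =>
    Real.sq_sqrt (mul_nonneg M.cast_nonneg (hlam_nonneg l))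
  have hww : ∀ l, ⟪w l, w l⟫ = √(M * lam l) ^ 2 := fun l => by
    rw [hsq, inner_self_sum_smul_eq_of_mulVec_eq_smul hM0 hK heig (by simp [horth])]
  have hwψ : ∀ l, w l = √(M * lam l) • ψ l := fun l => eq_smul_of_inner_self_eq_sq (hww l) (hψ l)
  have hρw : ∀ k, ρ k = ∑ l ∈ univ.filter fun l : Fin M => ¬ (l : ℕ) < r, v l k • w l := by
    intro k
    have hproj : ∀ l, ⟪u k, ψ l⟫ • ψ l = v l k • w l := fun l =>
      inner_smul_eq_smul_of_inner_self_eq_sq (hww l) (hψ l)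
        (by rw [inner_sum_smul_eq_of_mulVec_eq_smul hM0 hK heig, hsq])
    simp_rw [hρ, hproj, sub_eq_iff_eq_add', sum_filter_add_sum_filter_not]
    exact (sum_smul_sum_smul_of_orthonormal horth u k).symm
  calc (M : ℝ)⁻¹ * ∑ k, a (ρ k) (ρ k)
      = (M : ℝ)⁻¹ * ∑ l ∈ univ.filter fun l : Fin M => ¬ (l : ℕ) < r, a (w l) (w l) := by
        simp_rw [hρw, sum_bilin_sum_smul_of_orthonormal a horth]
    _ = ∑ l ∈ univ.filter fun l : Fin M => ¬ (l : ℕ) < r, lam l * a (ψ l) (ψ l) := by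
        rw [mul_sum]
        refine sum_congr rfl fun l _ => ?_
        rw [hwψ l, map_smul, LinearMap.map_smul₂, smul_smul, ← sq, hsq, smul_eq_mul]
        field_simp
    _ = _ := sum_filter_not_lt_eq_sum_filter_le_lt r d fun m hm => by
        rw [le_antisymm (not_lt.mp ((hd m).not.mp hm.not_gt)) (hlam_nonneg m), zero_mul]

/-- for `0 ≤ r ≤ d` (`d` the number of positive eigenvalues of `K`) and
any symmetric bilinear form `a` on `H`, the POD projection residuals
`ρ_k = u_k − Σ_{i=1}^r ⟨u_k, ψ_i⟩ ψ_i` satisfy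
`(1/M) Σ_k a(ρ_k, ρ_k) = Σ_{m=r+1}^d λ_m a(ψ_m, ψ_m)`. -/
theorem pod_residual_bilinear_identity
    {H : Type*} [NormedAddCommGroup H] [InnerProductSpace ℝ H]
    (M : ℕ) (hM : 1 ≤ M) (u : Fin M → H)
    (K : Matrix (Fin M) (Fin M) ℝ)
    (hK : ∀ k l : Fin M, K k l = (M : ℝ)⁻¹ * (inner ℝ (u k) (u l) : ℝ))
    (lam : Fin M → ℝ) (v : Fin M → (Fin M → ℝ))
    (hlam_nonneg : ∀ i, 0 ≤ lam i)
    (hlam_sorted : ∀ i j : Fin M, i ≤ j → lam j ≤ lam i)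
    (heig : ∀ l, K.mulVec (v l) = lam l • v l)
    (horth : ∀ l l' : Fin M, dotProduct (v l) (v l') = if l = l' then 1 else 0)
    (ψ : Fin M → H)
    (hψ : ∀ l, ψ l = (Real.sqrt (M * lam l))⁻¹ • ∑ i, v l i • u i)
    (d : ℕ) (hdM : d ≤ M)
    (hd : ∀ i : Fin M, (i : ℕ) < d ↔ 0 < lam i)
    (r : ℕ) (hrd : r ≤ d)
    (a : H →ₗ[ℝ] H →ₗ[ℝ] ℝ) (hsymm : ∀ x y : H, a x y = a y x)
    (ρ : Fin M → H)
    (hρ : ∀ k, ρ k = u k - ∑ i ∈ Finset.univ.filter fun i : Fin M => (i : ℕ) < r,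
        (inner ℝ (u k) (ψ i) : ℝ) • ψ i) :
    (M : ℝ)⁻¹ * ∑ k, a (ρ k) (ρ k) =
      ∑ m ∈ Finset.univ.filter fun m : Fin M => r ≤ (m : ℕ) ∧ (m : ℕ) < d,
        lam m * a (ψ m) (ψ m) :=
  pod_residual_bilinear_identity_general M hM u K hK lam v hlam_nonneg heig horth ψ hψ d hd r a ρ hρ
end

section
/- If w, u ∈ X satisfy the post-processing (Step 2) relation, then the numerical dissipation identity holds: ‖w‖² = ‖u‖² + 2 ν_T Δt ‖(I − P) G((w + u)/2)‖². -/
/-!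
Test the Step 2 relation with the midpoint `ψ = (w + u) / 2`: since `⟪w - u, w + u⟫ = ‖w‖² - ‖u‖²`,
the left side becomes `(‖w‖² - ‖u‖²) / (2 Δt)` and the right side `ν_T ‖(I − P) G((w + u)/2)‖²`.
-/

open scoped InnerProductSpace

section

variable {E : Type*} [NormedAddCommGroup E] [InnerProductSpace ℝ E]

theorem real_inner_sub_add_eq_norm_sq_sub_norm_sq (x y : E) :
    ⟪x - y, x + y⟫_ℝ = ‖x‖ ^ 2 - ‖y‖ ^ 2 := by
  rw [inner_sub_left, inner_add_right, inner_add_right, real_inner_comm x y,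
    real_inner_self_eq_norm_sq, real_inner_self_eq_norm_sq]
  ring

theorem norm_sq_eq_of_inner_midpoint_eq {Δt r : ℝ} (hΔt : Δt ≠ 0) {w u : E}
    (h : ⟪Δt⁻¹ • (w - u), (2 : ℝ)⁻¹ • (w + u)⟫_ℝ = r) :
    ‖w‖ ^ 2 = ‖u‖ ^ 2 + 2 * Δt * r := by
  rw [real_inner_smul_left, real_inner_smul_right,
    real_inner_sub_add_eq_norm_sq_sub_norm_sq] at h
  rw [← h]
  field_simp
  ring

end

theorem step2_numerical_dissipation_general
    {X Y : Type*} [NormedAddCommGroup X] [InnerProductSpace ℝ X]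
    [NormedAddCommGroup Y] [InnerProductSpace ℝ Y]
    (G : X →ₗ[ℝ] Y) (P : Y →ₗ[ℝ] Y)
    (Δt νT : ℝ) (hΔt : 0 < Δt)
    (w u : X)
    (hstep2 : ∀ ψ : X, (inner ℝ (Δt⁻¹ • (w - u)) ψ : ℝ) =
      νT * (inner ℝ (G ((2:ℝ)⁻¹ • (w + u)) - P (G ((2:ℝ)⁻¹ • (w + u))))
        (G ψ - P (G ψ)) : ℝ)) :
    ‖w‖ ^ 2 = ‖u‖ ^ 2 +
      2 * νT * Δt * ‖G ((2:ℝ)⁻¹ • (w + u)) - P (G ((2:ℝ)⁻¹ • (w + u)))‖ ^ 2 := by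
  have hmid := hstep2 ((2:ℝ)⁻¹ • (w + u))
  rw [real_inner_self_eq_norm_sq] at hmid
  rw [norm_sq_eq_of_inner_midpoint_eq hΔt.ne' hmid]
  ring

/-- if `w, u ∈ X` satisfy the post-processing (Step 2) relation, then the
numerical dissipation identity holds:
`‖w‖² = ‖u‖² + 2 ν_T Δt ‖(I − P) G((w + u)/2)‖²`. -/
theorem step2_numerical_dissipation
    {X Y : Type*} [NormedAddCommGroup X] [InnerProductSpace ℝ X]
    [NormedAddCommGroup Y] [InnerProductSpace ℝ Y]
    (G : X →ₗ[ℝ] Y) (P : Y →ₗ[ℝ] Y)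
    (Δt νT : ℝ) (hΔt : 0 < Δt) (hνT : 0 < νT)
    (w u : X)
    (hstep2 : ∀ ψ : X, (inner ℝ (Δt⁻¹ • (w - u)) ψ : ℝ) =
      νT * (inner ℝ (G ((2:ℝ)⁻¹ • (w + u)) - P (G ((2:ℝ)⁻¹ • (w + u))))
        (G ψ - P (G ψ)) : ℝ)) :
    ‖w‖ ^ 2 = ‖u‖ ^ 2 +
      2 * νT * Δt * ‖G ((2:ℝ)⁻¹ • (w + u)) - P (G ((2:ℝ)⁻¹ • (w + u)))‖ ^ 2 :=
  step2_numerical_dissipation_general G P Δt νT hΔt w u hstep2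
end

section
/- Unconditional stability of the backward Euler post-processed VMS-POD scheme: suppose sequences (u^n)_{n=0}^{M} and (w^n)_{n=1}^{M} in X are such that for each n = 0, …, M−1, the Step 1 relation holds with previous value u^n, new value w^{n+1} and forcing f^{n+1}, and the post-processing (Step 2) relation holds between w^{n+1} and u^{n+1}. Then for any Δt > 0: ‖u^M‖² + Σ_{n=0}^{M−1} [ 2 ν_T Δt ‖(I − P) G((w^{n+1} + u^{n+1})/2)‖² + ‖w^{n+1} − u^n‖² + ν Δt ‖G w^{n+1}‖² ] ≤ ‖u^0‖² + ν^{-1} Δt Σ_{n=0}^{M−1} F_{n+1}². -/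
open Finset

/-!
Testing Step 1 with `ψ = wⁿ⁺¹` kills the convective term by skew-symmetry, and the polarization
identity `2⟪w - u, w⟫ = ‖w‖² - ‖u‖² + ‖w - u‖²` together with Young's inequality for the forcing
gives `‖wⁿ⁺¹‖² + ‖wⁿ⁺¹ - uⁿ‖² + νΔt‖Gwⁿ⁺¹‖² ≤ ‖uⁿ‖² + ν⁻¹ΔtF²ₙ₊₁`. Testing Step 2 with the midpoint
`ψ = (wⁿ⁺¹ + uⁿ⁺¹)/2` turns its left side into `(‖wⁿ⁺¹‖² - ‖uⁿ⁺¹‖²)/(2Δt)`, so the post-processing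
only dissipates energy, exactly by `2ν_TΔt‖(I - P)G((wⁿ⁺¹ + uⁿ⁺¹)/2)‖²`. Summing the one-step
inequalities telescopes.
-/

theorem add_sum_range_le_of_succ_add_le {α : Type*} [AddCommMonoid α] [PartialOrder α]
    [IsOrderedAddMonoid α] {a c d : ℕ → α} {M : ℕ}
    (h : ∀ n < M, a (n + 1) + c n ≤ a n + d n) :
    a M + ∑ n ∈ range M, c n ≤ a 0 + ∑ n ∈ range M, d n := by
  induction M with
  | zero => simp
  | succ k ih =>
    calc a (k + 1) + ∑ n ∈ range (k + 1), c n
        = (a (k + 1) + c k) + ∑ n ∈ range k, c n := by rw [sum_range_succ]; abel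
      _ ≤ (a k + d k) + ∑ n ∈ range k, c n := add_le_add_left (h k k.lt_succ_self) _
      _ = (a k + ∑ n ∈ range k, c n) + d k := by abel
      _ ≤ (a 0 + ∑ n ∈ range k, d n) + d k := 
          add_le_add_left (ih fun n hn => h n (hn.trans k.lt_succ_self)) _
      _ = a 0 + ∑ n ∈ range (k + 1), d n := by rw [sum_range_succ, add_assoc]

section

variable {X Z : Type*} [NormedAddCommGroup X] [InnerProductSpace ℝ X]
  [NormedAddCommGroup Z] [InnerProductSpace ℝ Z]

theorem two_mul_real_inner_sub_self (x y : X) :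
    2 * inner ℝ (x - y) x = ‖x‖ ^ 2 - ‖y‖ ^ 2 + ‖x - y‖ ^ 2 := by
  rw [norm_sub_sq_real, inner_sub_left, real_inner_self_eq_norm_sq, real_inner_comm]
  ring

theorem real_inner_sub_add (x y : X) :
    inner ℝ (x - y) (x + y) = ‖x‖ ^ 2 - ‖y‖ ^ 2 := by
  rw [inner_sub_left, inner_add_right, inner_add_right, real_inner_self_eq_norm_sq,
    real_inner_self_eq_norm_sq, real_inner_comm x y]
  ring

theorem backwardEuler_energy_le (G : X →ₗ[ℝ] Z) (b : X →ₗ[ℝ] X →ₗ[ℝ] X →ₗ[ℝ] ℝ)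
    (hb : ∀ x y : X, b x y y = 0) {ν Δt F : ℝ} (hν : 0 < ν) (hΔt : 0 < Δt) {f u w : X}
    (hf : ∀ v : X, |(inner ℝ f v : ℝ)| ≤ F * ‖G v‖)
    (hstep : ∀ ψ : X, (inner ℝ (Δt⁻¹ • (w - u)) ψ : ℝ) + b w w ψ
      + ν * (inner ℝ (G w) (G ψ) : ℝ) = (inner ℝ f ψ : ℝ)) :
    ‖w‖ ^ 2 + ‖w - u‖ ^ 2 + ν * Δt * ‖G w‖ ^ 2 ≤ ‖u‖ ^ 2 + ν⁻¹ * Δt * F ^ 2 := by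
  have htested := hstep w
  rw [hb, real_inner_smul_left, real_inner_self_eq_norm_sq] at htested
  have hinner : inner ℝ (w - u) w = Δt * (inner ℝ f w - ν * ‖G w‖ ^ 2) :=
    (inv_mul_eq_iff_eq_mul₀ hΔt.ne').1 (by linarith)
  have hforcing : 2 * inner ℝ f w ≤ ν * ‖G w‖ ^ 2 + ν⁻¹ * F ^ 2 :=
    calc 2 * inner ℝ f w ≤ 2 * ‖G w‖ * F := by linarith [(le_abs_self _).trans (hf w)]
      _ ≤ ν * ‖G w‖ ^ 2 + ν⁻¹ * F ^ 2 := two_mul_le_add_mul_sq hν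
  nlinarith [two_mul_real_inner_sub_self w u, mul_le_mul_of_nonneg_left hforcing hΔt.le]

theorem postProcess_energy_eq (L : X → Z) {νT Δt : ℝ} (hΔt : 0 < Δt) {u w : X}
    (hstep : ∀ ψ : X, (inner ℝ (Δt⁻¹ • (w - u)) ψ : ℝ) =
      νT * (inner ℝ (L ((2 : ℝ)⁻¹ • (w + u))) (L ψ) : ℝ)) :
    ‖u‖ ^ 2 + 2 * νT * Δt * ‖L ((2 : ℝ)⁻¹ • (w + u))‖ ^ 2 = ‖w‖ ^ 2 := by
  have htested := hstep ((2 : ℝ)⁻¹ • (w + u))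
  rw [real_inner_smul_left, real_inner_smul_right, real_inner_sub_add,
    real_inner_self_eq_norm_sq] at htested
  field_simp at htested
  linarith

end

theorem backwardEuler_vms_pod_stability_general
    {X Y : Type*} [NormedAddCommGroup X] [InnerProductSpace ℝ X]
    [NormedAddCommGroup Y] [InnerProductSpace ℝ Y]
    (G : X →ₗ[ℝ] Y) (P : Y →ₗ[ℝ] Y)
    (ν νT Δt : ℝ) (hν : 0 < ν) (hΔt : 0 < Δt)
    (b : X →ₗ[ℝ] X →ₗ[ℝ] X →ₗ[ℝ] ℝ) (hb : ∀ x y : X, b x y y = 0)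
    (M : ℕ) (f : ℕ → X) (F : ℕ → ℝ)
    (hf : ∀ n, 1 ≤ n → n ≤ M → ∀ v : X, |(inner ℝ (f n) v : ℝ)| ≤ F n * ‖G v‖)
    (u w : ℕ → X)
    (hstep1 : ∀ n < M, ∀ ψ : X,
      (inner ℝ (Δt⁻¹ • (w (n+1) - u n)) ψ : ℝ) + b (w (n+1)) (w (n+1)) ψ
        + ν * (inner ℝ (G (w (n+1))) (G ψ) : ℝ) = (inner ℝ (f (n+1)) ψ : ℝ))
    (hstep2 : ∀ n < M, ∀ ψ : X,
      (inner ℝ (Δt⁻¹ • (w (n+1) - u (n+1))) ψ : ℝ) =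
        νT * (inner ℝ (G ((2:ℝ)⁻¹ • (w (n+1) + u (n+1)))
            - P (G ((2:ℝ)⁻¹ • (w (n+1) + u (n+1)))))
          (G ψ - P (G ψ)) : ℝ)) :
    ‖u M‖ ^ 2 + ∑ n ∈ Finset.range M,
        (2 * νT * Δt * ‖G ((2:ℝ)⁻¹ • (w (n+1) + u (n+1)))
            - P (G ((2:ℝ)⁻¹ • (w (n+1) + u (n+1))))‖ ^ 2
          + ‖w (n+1) - u n‖ ^ 2 + ν * Δt * ‖G (w (n+1))‖ ^ 2)
      ≤ ‖u 0‖ ^ 2 + ν⁻¹ * Δt * ∑ n ∈ Finset.range M, F (n+1) ^ 2 := by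
  rw [mul_sum]
  refine add_sum_range_le_of_succ_add_le (a := fun n => ‖u n‖ ^ 2) fun n hn => ?_
  have hstep1_energy :=
    backwardEuler_energy_le G b hb hν hΔt (hf (n + 1) (by omega) (by omega)) (hstep1 n hn)
  have hstep2_energy := postProcess_energy_eq (fun x => G x - P (G x)) hΔt (hstep2 n hn)
  linarith

/-- unconditional stability of the backward Euler post-processed
VMS-POD scheme. -/
theorem backwardEuler_vms_pod_stability
    {X Y : Type*} [NormedAddCommGroup X] [InnerProductSpace ℝ X]
    [NormedAddCommGroup Y] [InnerProductSpace ℝ Y]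
    (G : X →ₗ[ℝ] Y) (P : Y →ₗ[ℝ] Y)
    (ν νT Δt : ℝ) (hν : 0 < ν) (hνT : 0 < νT) (hΔt : 0 < Δt)
    (b : X →ₗ[ℝ] X →ₗ[ℝ] X →ₗ[ℝ] ℝ) (hb : ∀ x y : X, b x y y = 0)
    (M : ℕ) (f : ℕ → X) (F : ℕ → ℝ)
    (hF : ∀ n, 1 ≤ n → n ≤ M → 0 ≤ F n)
    (hf : ∀ n, 1 ≤ n → n ≤ M → ∀ v : X, |(inner ℝ (f n) v : ℝ)| ≤ F n * ‖G v‖)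
    (u w : ℕ → X)
    (hstep1 : ∀ n < M, ∀ ψ : X,
      (inner ℝ (Δt⁻¹ • (w (n+1) - u n)) ψ : ℝ) + b (w (n+1)) (w (n+1)) ψ
        + ν * (inner ℝ (G (w (n+1))) (G ψ) : ℝ) = (inner ℝ (f (n+1)) ψ : ℝ))
    (hstep2 : ∀ n < M, ∀ ψ : X,
      (inner ℝ (Δt⁻¹ • (w (n+1) - u (n+1))) ψ : ℝ) =
        νT * (inner ℝ (G ((2:ℝ)⁻¹ • (w (n+1) + u (n+1)))
            - P (G ((2:ℝ)⁻¹ • (w (n+1) + u (n+1)))))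
          (G ψ - P (G ψ)) : ℝ)) :
    ‖u M‖ ^ 2 + ∑ n ∈ Finset.range M,
        (2 * νT * Δt * ‖G ((2:ℝ)⁻¹ • (w (n+1) + u (n+1)))
            - P (G ((2:ℝ)⁻¹ • (w (n+1) + u (n+1))))‖ ^ 2
          + ‖w (n+1) - u n‖ ^ 2 + ν * Δt * ‖G (w (n+1))‖ ^ 2)
      ≤ ‖u 0‖ ^ 2 + ν⁻¹ * Δt * ∑ n ∈ Finset.range M, F (n+1) ^ 2 :=
  backwardEuler_vms_pod_stability_general G P ν νT Δt hν hΔt b hb M f F hf u w hstep1 hstep2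
end

section
/- If w, u⁺ ∈ X satisfy the post-processing (Step 2) relation, then for any u⁻ ∈ X the following identity (used in the BDF2 stability proof) holds: ‖2w − u⁻‖² − ‖2u⁺ − u⁻‖² = 8 ν_T Δt ‖(I − P) G((w + u⁺ − u⁻)/2)‖² − 8 ν_T Δt ⟨(I − P) G(−u⁻/2), (I − P) G((w + u⁺ − u⁻)/2)⟩. -/
/-!
Write `F = (I - P) G`, `v = w + u⁺ - u⁻`, `a = F(v/2)` and `b = F(-u⁻/2)`. The difference of
squares is `‖2w - u⁻‖² - ‖2u⁺ - u⁻‖² = 4 ⟪w - u⁺, v⟫`, and testing the Step 2 relation with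
`ψ = v` gives `⟪w - u⁺, v⟫ = ν_T Δt ⟪F((w + u⁺)/2), F v⟫ = 2 ν_T Δt ⟪a - b, a⟫`, since
`(w + u⁺)/2 = v/2 - (-u⁻/2)` and `F` is linear.
-/

open scoped RealInnerProductSpace

section

variable {X Y : Type*} [NormedAddCommGroup X] [InnerProductSpace ℝ X]
  [NormedAddCommGroup Y] [InnerProductSpace ℝ Y]

theorem norm_sq_sub_norm_sq_eq_real_inner (x y : X) :
    ‖x‖ ^ 2 - ‖y‖ ^ 2 = ⟪x - y, x + y⟫ := by
  rw [← real_inner_self_eq_norm_sq, ← real_inner_self_eq_norm_sq]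
  simp only [inner_sub_left, inner_add_right, real_inner_comm x y]
  ring

theorem norm_two_smul_sub_sq_sub_norm_two_smul_sub_sq (w u m : X) :
    ‖(2 : ℝ) • w - m‖ ^ 2 - ‖(2 : ℝ) • u - m‖ ^ 2 = 4 * ⟪w - u, w + u - m⟫ := by
  rw [norm_sq_sub_norm_sq_eq_real_inner]
  have hdiff : (2 : ℝ) • w - m - ((2 : ℝ) • u - m) = (2 : ℝ) • (w - u) := by
    rw [smul_sub]; abel
  have hsum : (2 : ℝ) • w - m + ((2 : ℝ) • u - m) = (2 : ℝ) • (w + u - m) := by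
    rw [smul_sub, smul_add, two_smul ℝ m]; abel
  rw [hdiff, hsum, real_inner_smul_left, real_inner_smul_right]
  ring

theorem norm_two_smul_sub_sq_sub_norm_two_smul_sub_sq_of_forall_inner_eq
    (F : X →ₗ[ℝ] Y) {Δt ν : ℝ} (hΔt : Δt ≠ 0) {w u : X}
    (hstep : ∀ ψ : X, ⟪Δt⁻¹ • (w - u), ψ⟫ = ν * ⟪F ((2 : ℝ)⁻¹ • (w + u)), F ψ⟫) (m : X) :
    ‖(2 : ℝ) • w - m‖ ^ 2 - ‖(2 : ℝ) • u - m‖ ^ 2 =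
      8 * ν * Δt * ‖F ((2 : ℝ)⁻¹ • (w + u - m))‖ ^ 2
        - 8 * ν * Δt * ⟪F ((2 : ℝ)⁻¹ • -m), F ((2 : ℝ)⁻¹ • (w + u - m))⟫ := by
  set a := F ((2 : ℝ)⁻¹ • (w + u - m))
  set b := F ((2 : ℝ)⁻¹ • -m)
  have hmid : F ((2 : ℝ)⁻¹ • (w + u)) = a - b := by
    rw [← map_sub, ← smul_sub, sub_neg_eq_add, sub_add_cancel]
  have hdouble : F (w + u - m) = (2 : ℝ) • a := by
    rw [← map_smul, smul_inv_smul₀ two_ne_zero]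
  have htest : ⟪w - u, w + u - m⟫ = 2 * ν * Δt * (⟪a, a⟫ - ⟪b, a⟫) := by
    have h := hstep (w + u - m)
    rw [hmid, hdouble, real_inner_smul_left, real_inner_smul_right, inner_sub_left a] at h
    field_simp at h
    linarith
  rw [norm_two_smul_sub_sq_sub_norm_two_smul_sub_sq, htest, real_inner_self_eq_norm_sq]
  ring

end

theorem bdf2_step2_identity_general
    {X Y : Type*} [NormedAddCommGroup X] [InnerProductSpace ℝ X]
    [NormedAddCommGroup Y] [InnerProductSpace ℝ Y]
    (G : X →ₗ[ℝ] Y) (P : Y →ₗ[ℝ] Y)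
    (Δt νT : ℝ) (hΔt : 0 < Δt)
    (w up um : X)
    (hstep2 : ∀ ψ : X, (inner ℝ (Δt⁻¹ • (w - up)) ψ : ℝ) =
      νT * (inner ℝ (G ((2:ℝ)⁻¹ • (w + up)) - P (G ((2:ℝ)⁻¹ • (w + up))))
        (G ψ - P (G ψ)) : ℝ)) :
    ‖(2:ℝ) • w - um‖ ^ 2 - ‖(2:ℝ) • up - um‖ ^ 2 =
      8 * νT * Δt * ‖G ((2:ℝ)⁻¹ • (w + up - um))
          - P (G ((2:ℝ)⁻¹ • (w + up - um)))‖ ^ 2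
        - 8 * νT * Δt * (inner ℝ (G ((2:ℝ)⁻¹ • (-um)) - P (G ((2:ℝ)⁻¹ • (-um))))
            (G ((2:ℝ)⁻¹ • (w + up - um)) - P (G ((2:ℝ)⁻¹ • (w + up - um)))) : ℝ) :=
  norm_two_smul_sub_sq_sub_norm_two_smul_sub_sq_of_forall_inner_eq (G - P ∘ₗ G) hΔt.ne'
    hstep2 um

/-- identity used in the BDF2 stability proof: if `w, u⁺` satisfy the
post-processing (Step 2) relation, then for any `u⁻`,
`‖2w − u⁻‖² − ‖2u⁺ − u⁻‖² = 8 ν_T Δt ‖(I−P)G((w+u⁺−u⁻)/2)‖²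
  − 8 ν_T Δt ⟨(I−P)G(−u⁻/2), (I−P)G((w+u⁺−u⁻)/2)⟩`. -/
theorem bdf2_step2_identity
    {X Y : Type*} [NormedAddCommGroup X] [InnerProductSpace ℝ X]
    [NormedAddCommGroup Y] [InnerProductSpace ℝ Y]
    (G : X →ₗ[ℝ] Y) (P : Y →ₗ[ℝ] Y)
    (Δt νT : ℝ) (hΔt : 0 < Δt) (hνT : 0 < νT)
    (w up um : X)
    (hstep2 : ∀ ψ : X, (inner ℝ (Δt⁻¹ • (w - up)) ψ : ℝ) =
      νT * (inner ℝ (G ((2:ℝ)⁻¹ • (w + up)) - P (G ((2:ℝ)⁻¹ • (w + up))))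
        (G ψ - P (G ψ)) : ℝ)) :
    ‖(2:ℝ) • w - um‖ ^ 2 - ‖(2:ℝ) • up - um‖ ^ 2 =
      8 * νT * Δt * ‖G ((2:ℝ)⁻¹ • (w + up - um))
          - P (G ((2:ℝ)⁻¹ • (w + up - um)))‖ ^ 2
        - 8 * νT * Δt * (inner ℝ (G ((2:ℝ)⁻¹ • (-um)) - P (G ((2:ℝ)⁻¹ • (-um))))
            (G ((2:ℝ)⁻¹ • (w + up - um)) - P (G ((2:ℝ)⁻¹ • (w + up - um)))) : ℝ) :=
  bdf2_step2_identity_general G P Δt νT hΔt w up um hstep2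
end

section
/- Consistency error of the backward difference quotient: let H be a real Hilbert space and u : ℝ → H be twice continuously differentiable on [t₀, t₁] with t₀ < t₁ and Δt := t₁ − t₀. Then ‖u'(t₁) − (u(t₁) − u(t₀))/Δt‖² ≤ (Δt/3) ∫_{t₀}^{t₁} ‖u''(s)‖² ds. -/
/-! Integrating by parts, `∫_{t₀}^{t₁} (s - t₀) • u''(s) ds = Δt • u'(t₁) - (u(t₁) - u(t₀))`, so the
consistency error is `Δt⁻¹` times this integral. Its norm is at most `∫ |s - t₀| ‖u''(s)‖ ds`, and
Cauchy–Schwarz in `L²(t₀, t₁)` with `∫ (s - t₀)² ds = Δt³ / 3` gives the bound. -/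

open MeasureTheory Set intervalIntegral
open scoped InnerProductSpace Interval

theorem integral_sub_smul_deriv_deriv_eq {E : Type*} [NormedAddCommGroup E]
    [NormedSpace ℝ E] [CompleteSpace E] {u u' u'' : ℝ → E} {a b : ℝ}
    (hu : ∀ t ∈ [[a, b]], HasDerivWithinAt u (u' t) [[a, b]] t)
    (hu' : ∀ t ∈ [[a, b]], HasDerivWithinAt u' (u'' t) [[a, b]] t)
    (hu'' : IntervalIntegrable u'' volume a b) :
    ∫ s in a..b, (s - a) • u'' s = (b - a) • u' b - (u b - u a) := by
  have hshift : ∀ t ∈ [[a, b]], HasDerivWithinAt (· - a) (1 : ℝ) [[a, b]] t :=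
    fun t _ => ((hasDerivAt_id t).sub_const a).hasDerivWithinAt
  have hu'_cont : ContinuousOn u' [[a, b]] := fun t ht => (hu' t ht).continuousWithinAt
  have hftc : ∫ s in a..b, u' s = u b - u a :=
    integral_eq_sub_of_hasDeriv_right (fun t ht => (hu t ht).continuousWithinAt)
      (fun t ht => ((hu t (Ioo_subset_Icc_self ht)).hasDerivAt
        (Icc_mem_nhds ht.1 ht.2)).hasDerivWithinAt)
      hu'_cont.intervalIntegrable
  rw [integral_smul_deriv_eq_deriv_smul_of_hasDerivWithinAt hshift hu'
    intervalIntegrable_const hu'']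
  simp [hftc]

theorem sq_integral_mul_le_integral_sq_mul_integral_sq {α : Type*} [MeasurableSpace α]
    {μ : Measure α} {f g : α → ℝ} (hf : MemLp f 2 μ) (hg : MemLp g 2 μ) :
    (∫ x, f x * g x ∂μ) ^ 2 ≤ (∫ x, f x ^ 2 ∂μ) * ∫ x, g x ^ 2 ∂μ := by
  have hinner {φ ψ : α → ℝ} (hφ : MemLp φ 2 μ) (hψ : MemLp ψ 2 μ) :
      ⟪hφ.toLp φ, hψ.toLp ψ⟫_ℝ = ∫ x, φ x * ψ x ∂μ := by
    rw [L2.inner_def]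
    refine integral_congr_ae ?_
    filter_upwards [hφ.coeFn_toLp, hψ.coeFn_toLp] with x hφx hψx
    simp [hφx, hψx, mul_comm]
  have := real_inner_mul_inner_self_le (hf.toLp f) (hg.toLp g)
  simpa only [hinner, ← sq] using this

theorem sq_intervalIntegral_mul_le_integral_sq_mul_integral_sq {f g : ℝ → ℝ} {a b : ℝ}
    (hab : a ≤ b) (hf : ContinuousOn f (Icc a b)) (hg : ContinuousOn g (Icc a b)) :
    (∫ x in a..b, f x * g x) ^ 2 ≤ (∫ x in a..b, f x ^ 2) * ∫ x in a..b, g x ^ 2 := by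
  have hL2 {φ : ℝ → ℝ} (hφ : ContinuousOn φ (Icc a b)) :
      MemLp φ 2 (volume.restrict (Ioc a b)) :=
    ((memLp_two_iff_integrable_sq (hφ.aestronglyMeasurable measurableSet_Icc)).2
      ((hφ.pow 2).integrableOn_compact isCompact_Icc)).mono_measure
      (Measure.restrict_mono Ioc_subset_Icc_self le_rfl)
  simp only [integral_of_le hab]
  exact sq_integral_mul_le_integral_sq_mul_integral_sq (hL2 hf) (hL2 hg)

/-- consistency error of the backward difference quotient: if `u` is twice
continuously differentiable on `[t₀, t₁]` with values in a real Hilbert space, then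
`‖u'(t₁) − (u(t₁) − u(t₀))/Δt‖² ≤ (Δt/3) ∫_{t₀}^{t₁} ‖u''(s)‖² ds` with `Δt = t₁ − t₀`. -/
theorem backward_difference_consistency_error
    {H : Type*} [NormedAddCommGroup H] [InnerProductSpace ℝ H] [CompleteSpace H]
    (u u' u'' : ℝ → H) (t₀ t₁ : ℝ) (ht : t₀ < t₁)
    (hu : ∀ t ∈ Set.Icc t₀ t₁, HasDerivWithinAt u (u' t) (Set.Icc t₀ t₁) t)
    (hu' : ∀ t ∈ Set.Icc t₀ t₁, HasDerivWithinAt u' (u'' t) (Set.Icc t₀ t₁) t)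
    (hu'' : ContinuousOn u'' (Set.Icc t₀ t₁)) :
    ‖u' t₁ - (t₁ - t₀)⁻¹ • (u t₁ - u t₀)‖ ^ 2 ≤
      (t₁ - t₀) / 3 * ∫ s in t₀..t₁, ‖u'' s‖ ^ 2 := by
  have hΔ : 0 < t₁ - t₀ := sub_pos.mpr ht
  have hremainder : u' t₁ - (t₁ - t₀)⁻¹ • (u t₁ - u t₀) =
      (t₁ - t₀)⁻¹ • ∫ s in t₀..t₁, (s - t₀) • u'' s := by
    rw [← uIcc_of_le ht.le] at hu hu' hu''
    rw [integral_sub_smul_deriv_deriv_eq hu hu' hu''.intervalIntegrable,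
      smul_sub _ (_ • _), inv_smul_smul₀ hΔ.ne']
  have hweight : ∫ s in t₀..t₁, |s - t₀| ^ 2 = (t₁ - t₀) ^ 3 / 3 := by
    norm_num [sq_abs, integral_comp_sub_right fun s => s ^ 2]
  have hbound : ‖∫ s in t₀..t₁, (s - t₀) • u'' s‖ ^ 2 ≤
      (t₁ - t₀) ^ 3 / 3 * ∫ s in t₀..t₁, ‖u'' s‖ ^ 2 := by
    calc ‖∫ s in t₀..t₁, (s - t₀) • u'' s‖ ^ 2
        ≤ (∫ s in t₀..t₁, |s - t₀| * ‖u'' s‖) ^ 2 := by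
          gcongr
          exact (intervalIntegral.norm_integral_le_integral_norm ht.le).trans_eq
            (by simp only [norm_smul, Real.norm_eq_abs])
      _ ≤ _ :=
        sq_intervalIntegral_mul_le_integral_sq_mul_integral_sq ht.le (by fun_prop) hu''.norm
      _ = _ := by rw [hweight]
  rw [hremainder, norm_smul, mul_pow, norm_inv, Real.norm_of_nonneg hΔ.le]
  calc (t₁ - t₀)⁻¹ ^ 2 * ‖∫ s in t₀..t₁, (s - t₀) • u'' s‖ ^ 2
      ≤ (t₁ - t₀)⁻¹ ^ 2 * ((t₁ - t₀) ^ 3 / 3 * ∫ s in t₀..t₁, ‖u'' s‖ ^ 2) := by gcongr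
    _ = (t₁ - t₀) / 3 * ∫ s in t₀..t₁, ‖u'' s‖ ^ 2 := by field_simp
end
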